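/- arXiv:1701.02809 — 5 statements merged into one kernel-verified Lean document; each statement's English description precedes it below -/
import Mathlib

section
/- Let r ≥ 100 be a real number, let p_L > 0 and p be reals with 0 < p ≤ 0.7·p_L, and set ε₁ = 3·p_L/√r and ε₂ = 2/√r. Then for every real p̂_L with |p̂_L − p_L| ≤ ε₁ and every real δ with |δ| ≤ ε₂, the quantity (p/p̂_L + δ)·p_L − p satisfies |(p/p̂_L + δ)·p_L − p| ≤ 5·p_L/√r. -/
/- The reported value splits as `(p / p̂_L · p_L − p) + δ · p_L`. The first term is
`(p / p̂_L) · (p_L − p̂_L)`, and since `r ≥ 100` forces `ε₁ ≤ 0.3 · p_L`, we get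
`p ≤ 0.7 · p_L ≤ p̂_L`, so it is at most `ε₁ = 3 p_L / √r`; the second is at most
`ε₂ · p_L = 2 p_L / √r`. -/

lemma abs_div_mul_sub_le {p q q' ε : ℝ} (hp : 0 ≤ p) (hpq' : p ≤ q') (hq : |q' - q| ≤ ε) :
    |p / q' * q - p| ≤ ε := by
  rcases hp.eq_or_lt with rfl | hp
  · simpa using (abs_nonneg _).trans hq
  have hq' : 0 < q' := hp.trans_le hpq'
  calc |p / q' * q - p| = p / q' * |q' - q| := by
        rw [show p / q' * q - p = p / q' * (q - q') by field_simp, abs_mul, abs_sub_comm,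
          abs_of_pos (div_pos hp hq')]
    _ ≤ 1 * ε := by gcongr; exact (div_le_one hq').2 hpq'
    _ = ε := one_mul ε

lemma div_sqrt_le_div_ten {a r : ℝ} (ha : 0 ≤ a) (hr : 100 ≤ r) : a / √r ≤ a / 10 :=
  div_le_div_of_nonneg_left ha (by norm_num) (Real.le_sqrt_of_sq_le (by linarith))

theorem iterative_estimation_error_bound
    (r p_L p : ℝ) (hr : 100 ≤ r) (hpL : 0 < p_L) (hp : 0 < p)
    (hple : p ≤ 0.7 * p_L)
    (ε₁ ε₂ : ℝ) (hε₁ : ε₁ = 3 * p_L / Real.sqrt r) (hε₂ : ε₂ = 2 / Real.sqrt r) :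
    ∀ phatL : ℝ, |phatL - p_L| ≤ ε₁ → ∀ δ : ℝ, |δ| ≤ ε₂ →
      |(p / phatL + δ) * p_L - p| ≤ 5 * p_L / Real.sqrt r := by
  intro phatL hphatL δ hδ
  have hε₁_le : ε₁ ≤ 3 * p_L / 10 := hε₁ ▸ div_sqrt_le_div_ten (by positivity) hr
  have hp_le : p ≤ phatL := by linarith [(abs_le.mp hphatL).1]
  calc |(p / phatL + δ) * p_L - p| = |(p / phatL * p_L - p) + δ * p_L| := by ring_nf
    _ ≤ |p / phatL * p_L - p| + |δ| * p_L :=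
        (abs_add_le _ _).trans_eq (by rw [abs_mul, abs_of_pos hpL])
    _ ≤ ε₁ + 2 / √r * p_L := by
        gcongr
        · exact abs_div_mul_sub_le hp.le hp_le hphatL
        · exact hε₂ ▸ hδ
    _ = 5 * p_L / √r := by rw [hε₁]; ring
end

section
/- Let 0 < p < 1 and r > 0 be reals. Then 6√2·√(p·√p·(1−√p)/r) ≤ 3·√(p·(1−p)/r) if and only if p ≤ 1/49. -/
/-!
Write `p = s²` with `0 < s < 1`. Both bounds are non-negative, so comparing them is comparing
their squares, and the gap between the squares factors as `9 s² (1 - s) (1 - 7 s) / r`.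
Hence the two-step bound is the smaller one exactly when `s ≤ 1/7`, that is `p ≤ 1/49`.
-/

open Real

theorem mul_sqrt_le_mul_sqrt_iff {a b x y : ℝ} (ha : 0 ≤ a) (hb : 0 ≤ b) (hy : 0 ≤ y) :
    a * √x ≤ b * √y ↔ a ^ 2 * x ≤ b ^ 2 * y := by
  have mul_sqrt_eq {c z : ℝ} (hc : 0 ≤ c) : c * √z = √(c ^ 2 * z) := by
    rw [sqrt_mul (sq_nonneg c), sqrt_sq hc]
  rw [mul_sqrt_eq ha, mul_sqrt_eq hb, sqrt_le_sqrt_iff (mul_nonneg (sq_nonneg b) hy)]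

theorem two_step_sq_le_order_statistics_sq_iff {s r : ℝ} (hs0 : 0 < s) (hs1 : s < 1)
    (hr : 0 < r) :
    72 * (s ^ 2 * s * (1 - s) / r) ≤ 9 * (s ^ 2 * (1 - s ^ 2) / r) ↔ s ≤ 1 / 7 := by
  have gap : 9 * (s ^ 2 * (1 - s ^ 2) / r) - 72 * (s ^ 2 * s * (1 - s) / r)
      = 9 * s ^ 2 * (1 - s) / r * (1 - 7 * s) := by
    field_simp
    ring
  have one_sub_pos : 0 < 1 - s := sub_pos.2 hs1
  rw [← sub_nonneg, gap, mul_nonneg_iff_of_pos_left (by positivity)]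
  constructor <;> intro h <;> linarith

theorem two_step_better_than_order_statistics_iff
    (p r : ℝ) (hp0 : 0 < p) (hp1 : p < 1) (hr : 0 < r) :
    6 * Real.sqrt 2 * Real.sqrt (p * Real.sqrt p * (1 - Real.sqrt p) / r)
      ≤ 3 * Real.sqrt (p * (1 - p) / r) ↔ p ≤ 1 / 49 := by
  obtain ⟨s, hs0, rfl⟩ : ∃ s, 0 < s ∧ s ^ 2 = p :=
    ⟨√p, sqrt_pos.2 hp0, sq_sqrt hp0.le⟩
  have hs1 : s < 1 := lt_of_pow_lt_pow_left₀ 2 zero_le_one (by simpa using hp1)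
  have order_statistics_nonneg : 0 ≤ s ^ 2 * (1 - s ^ 2) / r := by
    have : 0 ≤ 1 - s ^ 2 := by linarith
    positivity
  have six_sqrt_two_sq : (6 * √2) ^ 2 = 72 := by
    rw [mul_pow, sq_sqrt zero_le_two]
    norm_num
  rw [sqrt_sq hs0.le,
    mul_sqrt_le_mul_sqrt_iff (by positivity) zero_le_three order_statistics_nonneg,
    six_sqrt_two_sq, show (3 : ℝ) ^ 2 = 9 by norm_num,
    two_step_sq_le_order_statistics_sq_iff hs0 hs1 hr,
    show (1 : ℝ) / 49 = (1 / 7) ^ 2 by norm_num,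
    pow_le_pow_iff_left₀ hs0.le (by norm_num) two_ne_zero]
end

section
/- Let 0 < p < 1 and r > 0 be reals. The function x ↦ 3p·(√((1/x − 1)/(r/2)) + √((x/p − 1)/(r/2))), defined for p < x < 1, has derivative 0 at x = √p. -/
/-! At `x = √p` the two radicands `(1/x - 1)/c` and `(x/p - 1)/c` coincide, since `√p / p = 1 / √p`,
while their derivatives `-1/(x²c)` and `1/(pc)` are opposite there. The derivative of a sum of
square roots, `f'/(2√f) + g'/(2√g)`, therefore vanishes. -/

open Real

theorem HasDerivAt.sqrt_add_sqrt_of_eq {f g : ℝ → ℝ} {f' g' x : ℝ}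
    (hf : HasDerivAt f f' x) (hg : HasDerivAt g g' x) (hfg : f x = g x) (hfx : f x ≠ 0)
    (hsum : f' + g' = 0) :
    HasDerivAt (fun y => √(f y) + √(g y)) 0 x := by
  have h := (hf.sqrt hfx).add (hg.sqrt (hfg ▸ hfx))
  rwa [← hfg, ← add_div, hsum, zero_div] at h

theorem hasDerivAt_inv_sub_one_div {x : ℝ} (c : ℝ) (hx : x ≠ 0) :
    HasDerivAt (fun y : ℝ => (1 / y - 1) / c) (-(x ^ 2)⁻¹ / c) x := by
  simpa only [one_div] using ((hasDerivAt_inv hx).sub_const 1).div_const c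

theorem hasDerivAt_div_sub_one_div (p c x : ℝ) :
    HasDerivAt (fun y : ℝ => (y / p - 1) / c) (p⁻¹ / c) x := by
  simpa only [one_div, id] using (((hasDerivAt_id x).div_const p).sub_const 1).div_const c

theorem sqrt_div_self_eq_one_div_sqrt {p : ℝ} (hp : 0 < p) : √p / p = 1 / √p := by
  rw [div_eq_div_iff hp.ne' (sqrt_pos.2 hp).ne', one_mul, mul_self_sqrt hp.le]

theorem two_step_error_stationary_in_p₁
    (p r : ℝ) (hp0 : 0 < p) (hp1 : p < 1) (hr : 0 < r) :
    HasDerivAt (fun x : ℝ => 3 * p * (Real.sqrt ((1 / x - 1) / (r / 2))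
      + Real.sqrt ((x / p - 1) / (r / 2)))) 0 (Real.sqrt p) := by
  have hs0 : √p ≠ 0 := (sqrt_pos.2 hp0).ne'
  have hs1 : √p ≠ 1 := fun h => hp1.ne (sqrt_eq_one.1 h)
  have hradicands : (1 / √p - 1) / (r / 2) = (√p / p - 1) / (r / 2) := by
    rw [sqrt_div_self_eq_one_div_sqrt hp0]
  have hradicand_ne : (1 / √p - 1) / (r / 2) ≠ 0 :=
    div_ne_zero (sub_ne_zero.2 (by rwa [ne_eq, div_eq_one_iff_eq hs0, eq_comm])) (by positivity)
  have hslopes : -(√p ^ 2)⁻¹ / (r / 2) + p⁻¹ / (r / 2) = 0 := by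
    rw [sq_sqrt hp0.le]; ring
  simpa only [mul_zero] using
    ((hasDerivAt_inv_sub_one_div (r / 2) hs0).sqrt_add_sqrt_of_eq
      (hasDerivAt_div_sub_one_div p (r / 2) √p) hradicands hradicand_ne hslopes).const_mul (3 * p)
end

section
/- Let 0 < p < 1 and r > 0 be reals. The function y ↦ 3p·(√((1/√p − 1)/y) + √((√p/p − 1)/(r − y))), defined for 0 < y < r, has derivative 0 at y = r/2. -/
theorem HasDerivAt.add_comp_const_sub_midpoint {f : ℝ → ℝ} {f' r : ℝ}
    (hf : HasDerivAt f f' (r / 2)) : HasDerivAt (fun y => f y + f (r - y)) 0 (r / 2) := by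
  have hreflect : HasDerivAt (fun y => f (r - y)) (f' * -1) (r / 2) := by
    have hf' : HasDerivAt f f' (r - r / 2) := by rwa [sub_half]
    exact hf'.comp (r / 2) ((hasDerivAt_id _).const_sub r)
  exact (hf.add hreflect).congr_deriv (by ring)

theorem differentiableAt_sqrt_const_div {a x : ℝ} (ha : a ≠ 0) (hx : x ≠ 0) :
    DifferentiableAt ℝ (fun y => √(a / y)) x :=
  ((differentiableAt_const a).div differentiableAt_id hx).sqrt (div_ne_zero ha hx)

theorem two_step_error_stationary_in_r₁_general
    (p r : ℝ) (hp1 : p < 1) (hr : 0 < r) :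
    HasDerivAt (fun y : ℝ => 3 * p * (Real.sqrt ((1 / Real.sqrt p - 1) / y)
      + Real.sqrt ((Real.sqrt p / p - 1) / (r - y)))) 0 (r / 2) := by
  have ha : 1 / √p - 1 ≠ 0 := by
    rw [sub_ne_zero, one_div, Ne, inv_eq_one, Real.sqrt_eq_one]
    exact hp1.ne
  -- `√p / p = 1 / √p`, so the function is `g y + g (r - y)`, symmetric about `r / 2`.
  have hstationary := ((differentiableAt_sqrt_const_div ha (half_pos hr).ne').hasDerivAt
    |>.add_comp_const_sub_midpoint).const_mul (3 * p)
  simpa only [Real.sqrt_div_self', mul_zero] using hstationary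

theorem two_step_error_stationary_in_r₁
    (p r : ℝ) (hp0 : 0 < p) (hp1 : p < 1) (hr : 0 < r) :
    HasDerivAt (fun y : ℝ => 3 * p * (Real.sqrt ((1 / Real.sqrt p - 1) / y)
      + Real.sqrt ((Real.sqrt p / p - 1) / (r - y)))) 0 (r / 2) :=
  two_step_error_stationary_in_r₁_general p r hp1 hr
end

section
/- Let p > 0, p_L, ε₁, ε₂ be reals with ε₂ ≥ 0, 0 < ε₁, and p_L − ε₁ ≥ p. Then for every real p̂_L with |p̂_L − p_L| ≤ ε₁ and every real δ with |δ| ≤ ε₂, one has |(p/p̂_L + δ)·p_L − p| ≤ ε₁ + p_L·ε₂. -/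
theorem abs_div_mul_sub_le_abs_sub {p q L : ℝ} (hp : 0 ≤ p) (hpq : p ≤ q) :
    |p / q * L - p| ≤ |L - q| := by
  have hq : 0 ≤ q := hp.trans hpq
  -- `q = 0` forces `p = 0`, so the junk value `p / 0 = 0` is harmless
  have hcancel : p / q * q = p := div_mul_cancel_of_imp fun h => le_antisymm (h ▸ hpq) hp
  calc |p / q * L - p| = |p / q| * |L - q| := by rw [← abs_mul, mul_sub, hcancel]
    _ ≤ 1 * |L - q| := by
      gcongr
      rw [abs_of_nonneg (div_nonneg hp hq)]
      exact div_le_one_of_le₀ hpq hq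
    _ = |L - q| := one_mul _

theorem iterative_error_bound_simplified_general
    (p p_L ε₁ ε₂ : ℝ) (hp : 0 < p)
    (hpLp : p ≤ p_L - ε₁) :
    ∀ phatL : ℝ, |phatL - p_L| ≤ ε₁ → ∀ δ : ℝ, |δ| ≤ ε₂ →
      |(p / phatL + δ) * p_L - p| ≤ ε₁ + p_L * ε₂ := by
  intro phatL hphat δ hδ
  have hε₁ : 0 ≤ ε₁ := (abs_nonneg _).trans hphat
  have hpL : 0 ≤ p_L := by linarith
  have hp_le : p ≤ phatL := by linarith [(abs_sub_le_iff.mp hphat).2]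
  calc |(p / phatL + δ) * p_L - p| = |(p / phatL * p_L - p) + δ * p_L| := by ring_nf
    _ ≤ |p / phatL * p_L - p| + |δ * p_L| := abs_add_le _ _
    _ ≤ |p_L - phatL| + ε₂ * p_L := by
      rw [abs_mul, abs_of_nonneg hpL]
      exact add_le_add (abs_div_mul_sub_le_abs_sub hp.le hp_le) (mul_le_mul_of_nonneg_right hδ hpL)
    _ ≤ ε₁ + p_L * ε₂ := by
      rw [abs_sub_comm, mul_comm]
      gcongr

theorem iterative_error_bound_simplified
    (p p_L ε₁ ε₂ : ℝ) (hp : 0 < p) (hε₂ : 0 ≤ ε₂) (hε₁0 : 0 < ε₁)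
    (hpLp : p ≤ p_L - ε₁) :
    ∀ phatL : ℝ, |phatL - p_L| ≤ ε₁ → ∀ δ : ℝ, |δ| ≤ ε₂ →
      |(p / phatL + δ) * p_L - p| ≤ ε₁ + p_L * ε₂ :=
  iterative_error_bound_simplified_general p p_L ε₁ ε₂ hp hpLp
end
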